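/- Let {P1(s_t)} and {P2(s_t)} be the marginal state distributions of two time-inhomogeneous Markov processes on a measurable state space S with the same initial distribution P1(s_0) = P2(s_0). Suppose that for every t, the expected one-step transition discrepancy satisfies E_{s∼P1(s_t)}[ D_TV(P1(s'|s), P2(s'|s)) ] ≤ δ, where P_i(s'|s) is the transition kernel of process i at step t. Then for every t ≥ 0, D_TV(P1(s_t), P2(s_t)) ≤ t·δ. -/

import Mathlib

open MeasureTheory ProbabilityTheory

/-- Total variation distance between two measures:
`D_TV(μ, ν) = sup_{A measurable} |μ(A) − ν(A)|`. -/
noncomputable def tvDist {S : Type*} [MeasurableSpace S] (μ ν : Measure S) : ℝ :=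
  ⨆ A : {A : Set S // MeasurableSet A}, |(μ A.1).toReal - (ν A.1).toReal|

/-- The marginal state distribution at time `t` of a time-inhomogeneous Markov process
with initial distribution `μ0` and transition kernels `κ 0, κ 1, …`. -/
noncomputable def marginal {S : Type*} [MeasurableSpace S]
    (μ0 : Measure S) (κ : ℕ → Kernel S S) : ℕ → Measure S
  | 0 => μ0
  | t + 1 => (marginal μ0 κ t).bind (fun s => κ t s)

/-! Passing from `κ ∘ₘ μ` to `η ∘ₘ ν` through `η ∘ₘ μ`, the change of kernel costs
`∫ tvDist (κ s) (η s) ∂μ` and the change of initial measure costs `tvDist μ ν`, since integrals of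
`[0, 1]`-valued functions are controlled by the distance of the measures (layer cake). So each step
of the two processes adds at most `δ` to the distance of their marginals. -/

open Set

section TVDist

variable {S : Type*} [MeasurableSpace S] {μ ν : Measure S}

lemma abs_measureReal_sub_le_tvDist [IsFiniteMeasure μ] [IsFiniteMeasure ν] {A : Set S}
    (hA : MeasurableSet A) : |μ.real A - ν.real A| ≤ tvDist μ ν := by
  refine le_ciSup (f := fun B : {B : Set S // MeasurableSet B} => |μ.real B - ν.real B|)
    ⟨μ.real univ + ν.real univ, ?_⟩ ⟨A, hA⟩
  rintro _ ⟨B, rfl⟩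
  calc |μ.real B - ν.real B| ≤ |μ.real B| + |ν.real B| := abs_sub _ _
    _ ≤ μ.real univ + ν.real univ := by
      rw [abs_of_nonneg measureReal_nonneg, abs_of_nonneg measureReal_nonneg]
      exact add_le_add (measureReal_mono (subset_univ _)) (measureReal_mono (subset_univ _))

lemma tvDist_nonneg [IsFiniteMeasure μ] [IsFiniteMeasure ν] : 0 ≤ tvDist μ ν :=
  (abs_nonneg _).trans (abs_measureReal_sub_le_tvDist MeasurableSet.empty)

@[simp]
lemma tvDist_self : tvDist μ μ = 0 := by
  simp [tvDist]

/-- The reverse inequality comes from applying `h` to the complement. -/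
lemma tvDist_le_of_forall_measureReal_sub_le [IsProbabilityMeasure μ] [IsProbabilityMeasure ν]
    {c : ℝ} (h : ∀ A, MeasurableSet A → μ.real A - ν.real A ≤ c) : tvDist μ ν ≤ c := by
  have hc : 0 ≤ c := by simpa using h ∅ MeasurableSet.empty
  refine Real.iSup_le (fun ⟨A, hA⟩ => abs_sub_le_iff.2 ⟨h A hA, ?_⟩) hc
  change ν.real A - μ.real A ≤ c
  have hcompl := h Aᶜ hA.compl
  rw [probReal_compl_eq_one_sub hA, probReal_compl_eq_one_sub hA] at hcompl
  linarith

lemma tvDist_le_one [IsProbabilityMeasure μ] [IsProbabilityMeasure ν] : tvDist μ ν ≤ 1 :=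
  tvDist_le_of_forall_measureReal_sub_le fun A _ => by
    linarith [measureReal_le_one (μ := μ) (s := A), measureReal_nonneg (μ := ν) (s := A)]

/-- Layer cake: `∫ f ∂ρ = ∫ t in (0, 1], ρ {t ≤ f}`, and the integrands differ by at most the
total variation distance for each `t`. -/
lemma integral_sub_integral_le_tvDist [IsFiniteMeasure μ] [IsFiniteMeasure ν] {f : S → ℝ}
    (hf : Measurable f) (hf0 : ∀ s, 0 ≤ f s) (hf1 : ∀ s, f s ≤ 1) :
    ∫ s, f s ∂μ - ∫ s, f s ∂ν ≤ tvDist μ ν := by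
  have layer (ρ : Measure S) [IsFiniteMeasure ρ] :
      ∫ s, f s ∂ρ = ∫ t in Ioc 0 1, ρ.real {s | t ≤ f s} := by
    refine Integrable.integral_eq_integral_Ioc_meas_le ?_ (ae_of_all _ hf0) (ae_of_all _ hf1)
    exact .of_bound hf.aestronglyMeasurable 1
      (ae_of_all _ fun s => by rw [Real.norm_of_nonneg (hf0 s)]; exact hf1 s)
  have tail_integrable (ρ : Measure S) [IsFiniteMeasure ρ] :
      IntegrableOn (fun t : ℝ => ρ.real {s | t ≤ f s}) (Ioc 0 1) := by
    have hanti : Antitone fun t : ℝ => ρ.real {s | t ≤ f s} :=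
      fun t t' htt' => measureReal_mono fun s hs => htt'.trans hs
    exact ((hanti.antitoneOn _).integrableOn_isCompact isCompact_Icc).mono_set Ioc_subset_Icc_self
  rw [layer μ, layer ν, ← integral_sub (tail_integrable μ) (tail_integrable ν)]
  calc ∫ t in Ioc 0 1, (μ.real {s | t ≤ f s} - ν.real {s | t ≤ f s})
      ≤ ∫ _ in Ioc (0 : ℝ) 1, tvDist μ ν :=
        integral_mono ((tail_integrable μ).sub (tail_integrable ν)) (integrable_const _)
          fun t => (le_abs_self _).trans
            (abs_measureReal_sub_le_tvDist (measurableSet_le measurable_const hf))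
    _ = tvDist μ ν := by simp

end TVDist

section Composition

variable {S T : Type*} [MeasurableSpace S] [MeasurableSpace T]

lemma measureReal_comp (μ : Measure S) (κ : Kernel S T) [IsFiniteKernel κ] {A : Set T}
    (hA : MeasurableSet A) : (κ ∘ₘ μ).real A = ∫ s, (κ s).real A ∂μ := by
  rw [measureReal_def, Measure.bind_apply hA κ.aemeasurable]
  exact (integral_toReal (κ.measurable_coe hA).aemeasurable
    (ae_of_all _ fun _ => measure_lt_top _ _)).symm

lemma tvDist_comp_le (μ ν : Measure S) [IsProbabilityMeasure μ] [IsProbabilityMeasure ν]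
    (κ η : Kernel S T) [IsMarkovKernel κ] [IsMarkovKernel η]
    (hmeas : Measurable fun s => tvDist (κ s) (η s)) :
    tvDist (κ ∘ₘ μ) (η ∘ₘ ν) ≤ tvDist μ ν + ∫ s, tvDist (κ s) (η s) ∂μ := by
  refine tvDist_le_of_forall_measureReal_sub_le fun A hA => ?_
  have hκA : Measurable fun s => (κ s).real A := (κ.measurable_coe hA).ennreal_toReal
  have hηA : Measurable fun s => (η s).real A := (η.measurable_coe hA).ennreal_toReal
  have bounded_integrable {g : S → ℝ} (hg : Measurable g) (hg0 : ∀ s, 0 ≤ g s)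
      (hg1 : ∀ s, g s ≤ 1) : Integrable g μ :=
    .of_bound hg.aestronglyMeasurable 1
      (ae_of_all _ fun s => by rw [Real.norm_of_nonneg (hg0 s)]; exact hg1 s)
  have hκ_int := bounded_integrable hκA (fun _ => measureReal_nonneg) fun _ => measureReal_le_one
  have hη_int := bounded_integrable hηA (fun _ => measureReal_nonneg) fun _ => measureReal_le_one
  have kernel_change : ∫ s, (κ s).real A ∂μ - ∫ s, (η s).real A ∂μ
      ≤ ∫ s, tvDist (κ s) (η s) ∂μ := by
    rw [← integral_sub hκ_int hη_int]
    exact integral_mono (hκ_int.sub hη_int)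
      (bounded_integrable hmeas (fun _ => tvDist_nonneg) fun _ => tvDist_le_one)
      fun s => (le_abs_self _).trans (abs_measureReal_sub_le_tvDist hA)
  have measure_change : ∫ s, (η s).real A ∂μ - ∫ s, (η s).real A ∂ν ≤ tvDist μ ν :=
    integral_sub_integral_le_tvDist hηA (fun _ => measureReal_nonneg) fun _ => measureReal_le_one
  rw [measureReal_comp μ κ hA, measureReal_comp ν η hA]
  linarith

end Composition

instance isProbabilityMeasure_marginal {S : Type*} [MeasurableSpace S] (μ0 : Measure S)
    [IsProbabilityMeasure μ0] (κ : ℕ → Kernel S S) [∀ t, IsMarkovKernel (κ t)] (t : ℕ) :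
    IsProbabilityMeasure (marginal μ0 κ t) := by
  induction t with
  | zero => assumption
  | succ t ih => exact inferInstanceAs (IsProbabilityMeasure (κ t ∘ₘ marginal μ0 κ t))

/-- TV bound for rollout state distributions.
Two time-inhomogeneous Markov processes with the same initial distribution, whose
expected one-step transition discrepancy (under the first process's marginals) is at most
`δ` at every step, have marginals at most `t·δ` apart in total variation at every time `t`. -/
theorem tv_marginal_le_time_mul_delta
    {S : Type*} [MeasurableSpace S]
    (μ0 : Measure S) [IsProbabilityMeasure μ0]
    (κ1 κ2 : ℕ → Kernel S S)
    [∀ t, IsMarkovKernel (κ1 t)] [∀ t, IsMarkovKernel (κ2 t)]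
    (δ : ℝ)
    (hmeas : ∀ t, Measurable fun s => tvDist (κ1 t s) (κ2 t s))
    (hδ : ∀ t, ∫ s, tvDist (κ1 t s) (κ2 t s) ∂(marginal μ0 κ1 t) ≤ δ) :
    ∀ t : ℕ, tvDist (marginal μ0 κ1 t) (marginal μ0 κ2 t) ≤ t * δ := by
  intro t
  induction t with
  | zero => simp [marginal]
  | succ t ih =>
    calc tvDist (marginal μ0 κ1 (t + 1)) (marginal μ0 κ2 (t + 1))
        ≤ tvDist (marginal μ0 κ1 t) (marginal μ0 κ2 t)
          + ∫ s, tvDist (κ1 t s) (κ2 t s) ∂(marginal μ0 κ1 t) :=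
          tvDist_comp_le _ _ (κ1 t) (κ2 t) (hmeas t)
      _ ≤ t * δ + δ := add_le_add ih (hδ t)
      _ = (t + 1 : ℕ) * δ := by push_cast; ring
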